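/- arXiv:1401.0854 — 2 statements merged into one kernel-verified Lean document; each statement's English description precedes it below -/
import Mathlib

section
/- Define B(m) = Σ_{k ∈ ℤ} binom(m, k)²·binom(m+k, k) for every integer m (this sum has only finitely many nonzero terms). Then for every integer n > 0, B(-n) = (-1)^{n-1}·B(n-1). -/
/-- The generalized binomial coefficient for integer entries: for `k ≥ 0` it is
`n(n-1)⋯(n-k+1)/k!`; for `k < 0` and `n - k ≥ 0` it is `binom n (n-k)`; and it is `0`
when `k < 0` and `n - k < 0`. -/
def binom (n k : ℤ) : ℤ :=
  if 0 ≤ k then (∏ i ∈ Finset.range k.toNat, (n - (i : ℤ))) / (k.toNat.factorial : ℤ)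
  else if 0 ≤ n - k then
    (∏ i ∈ Finset.range (n - k).toNat, (n - (i : ℤ))) / ((n - k).toNat.factorial : ℤ)
  else 0

/-- The Apéry-like numbers (for ζ(2)) extended to all integers:
`B(m) = ∑_{k ∈ ℤ} binom(m,k)² binom(m+k,k)` (a finite sum). -/
noncomputable def B (m : ℤ) : ℤ :=
  ∑ᶠ k : ℤ, binom m k ^ 2 * binom (m + k) k


/-! Writing `n = N + 1`, the upper negation `binom (-r) k = (-1)^k binom (r + k - 1) k` turns
`B (-(N + 1))` into `∑ₖ (-1)^k C(N+k,k)² C(N,k)`, negative `k` contributing nothing. Expanding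
one factor by Vandermonde, `C(N+k,k) = ∑ⱼ C(N,j) C(k,j)`, and swapping the sums reduces the claim
to `∑ₖ (-1)^k C(N,k) C(k,j) C(N+k,k) = (-1)^N C(N,j) C(N+j,j)`. Since
`(-1)^k C(N+k,k) = binom (-(N+1)) k`, this is Chu–Vandermonde at the negative upper argument
`-(N + 1) + (N - j) = -(j + 1)`. -/

open Finset

lemma binom_natCast_eq_ringChoose (n : ℤ) (k : ℕ) : binom n k = Ring.choose n k := by
  have hk : (k.factorial : ℤ) ≠ 0 := by exact_mod_cast k.factorial_ne_zero
  rw [binom, if_pos k.cast_nonneg, Int.toNat_natCast, ← descPochhammer_eval_eq_prod_range,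
    Polynomial.eval_eq_smeval, Ring.descPochhammer_eq_factorial_smul_choose, nsmul_eq_mul,
    Int.mul_ediv_cancel_left _ hk]

lemma binom_natCast (n k : ℕ) : binom n k = n.choose k := by
  rw [binom_natCast_eq_ringChoose, Ring.choose_natCast]

lemma binom_neg (r : ℤ) (k : ℕ) : binom (-r) k = (-1) ^ k * binom (r + k - 1) k := by
  rw [binom_natCast_eq_ringChoose, binom_natCast_eq_ringChoose, Ring.choose_neg, Units.smul_def,
    Int.coe_negOnePow_natCast, smul_eq_mul]

lemma binom_neg_succ (N k : ℕ) : binom (-(N + 1 : ℤ)) k = (-1) ^ k * (N + k).choose k := by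
  rw [binom_neg, add_sub_right_comm, add_sub_cancel_right, ← Nat.cast_add, binom_natCast]

lemma binom_add_natCast (r : ℤ) (M n : ℕ) :
    binom (r + M) n = ∑ ij ∈ antidiagonal n, binom r ij.1 * M.choose ij.2 := by
  simp only [binom_natCast_eq_ringChoose, Ring.add_choose_eq n (Commute.all r M),
    Ring.choose_natCast]

lemma binom_eq_zero_of_neg_of_nonneg {n k : ℤ} (hk : k < 0) (hn : 0 ≤ n) : binom n k = 0 := by
  have hmem : n.toNat ∈ range (n - k).toNat := mem_range.2 (by omega)
  rw [binom, if_neg hk.not_ge, if_pos (by omega), prod_eq_zero hmem (by omega), Int.zero_ediv]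

lemma binom_eq_zero_of_neg_of_lt {n k : ℤ} (hk : k < 0) (h : n < k) : binom n k = 0 := by
  rw [binom, if_neg hk.not_ge, if_neg (by omega)]

lemma finsum_int_eq_sum_range {M : Type*} [AddCommMonoid M] {f : ℤ → M} (N : ℕ)
    (hneg : ∀ k < 0, f k = 0) (hbig : ∀ k : ℕ, N < k → f k = 0) :
    ∑ᶠ k, f k = ∑ k ∈ range (N + 1), f k := by
  calc ∑ᶠ k, f k = ∑ k ∈ (range (N + 1)).map Nat.castEmbedding, f k :=
        finsum_eq_sum_of_support_subset f fun k hk => ?_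
    _ = ∑ k ∈ range (N + 1), f k := sum_map _ _ _
  obtain ⟨b, rfl⟩ : ∃ b : ℕ, (b : ℤ) = k := ⟨k.toNat, Int.toNat_of_nonneg <| by
    by_contra h; exact hk (hneg k (by omega))⟩
  refine mem_map_of_mem _ (mem_range.2 ?_)
  by_contra h; exact hk (hbig b (by omega))

lemma B_natCast (N : ℕ) : B N = ∑ k ∈ range (N + 1), (N.choose k ^ 2 * (N + k).choose k : ℤ) := by
  rw [B, finsum_int_eq_sum_range N]
  · refine sum_congr rfl fun k _ => ?_
    rw [← Nat.cast_add, binom_natCast, binom_natCast]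
  · intro k hk
    rw [binom_eq_zero_of_neg_of_nonneg hk N.cast_nonneg, zero_pow two_ne_zero, zero_mul]
  · intro k hk
    rw [binom_natCast, Nat.choose_eq_zero_of_lt hk, Nat.cast_zero, zero_pow two_ne_zero, zero_mul]

lemma B_neg_succ (N : ℕ) :
    B (-(N + 1 : ℤ)) = ∑ k ∈ range (N + 1), ((-1) ^ k * (N + k).choose k ^ 2 * N.choose k : ℤ) := by
  have hterm (k : ℕ) : binom (-(N + 1 : ℤ)) k ^ 2 * binom (-(N + 1 : ℤ) + k) k =
      (-1) ^ k * (N + k).choose k ^ 2 * N.choose k := by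
    rw [binom_neg_succ, show -(N + 1 : ℤ) + k = -((N + 1 - k : ℤ)) by ring, binom_neg,
      show (N + 1 - k + k - 1 : ℤ) = N by ring, binom_natCast]
    have hsq : ((-1 : ℤ) ^ k) ^ 2 = 1 := by rw [← pow_mul, mul_comm, pow_mul, neg_one_sq, one_pow]
    rw [mul_pow, hsq]
    ring
  rw [B, finsum_int_eq_sum_range N]
  · exact sum_congr rfl fun k _ => hterm k
  · intro k hk
    rw [binom_eq_zero_of_neg_of_lt (n := -(N + 1 : ℤ) + k) hk (by omega), mul_zero]
  · intro k hk
    rw [hterm, Nat.choose_eq_zero_of_lt hk, Nat.cast_zero, mul_zero]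

lemma add_choose_eq_sum_choose_mul_choose (N k : ℕ) :
    (N + k).choose k = ∑ j ∈ range (N + 1), N.choose j * k.choose j := by
  rw [← Nat.choose_symm_add, Nat.add_choose_eq, Nat.sum_antidiagonal_eq_sum_range_succ_mk,
    ← sum_range_reflect]
  refine sum_congr rfl fun j hj => ?_
  have hj : j ≤ N := mem_range_succ_iff.1 hj
  rw [show N + 1 - 1 - j = N - j by omega, Nat.sub_sub_self hj, Nat.choose_symm hj]

lemma choose_mul_choose_eq_choose_mul_choose_sub {N k j : ℕ} (hk : k ≤ N) (hj : j ≤ N) :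
    N.choose k * k.choose j = N.choose j * (N - j).choose (N - k) := by
  rcases le_or_gt j k with hjk | hkj
  · rw [Nat.choose_mul hjk,
      Nat.choose_symm_of_eq_add (n := N - j) (a := k - j) (b := N - k) (by omega)]
  · rw [Nat.choose_eq_zero_of_lt hkj, Nat.choose_eq_zero_of_lt (by omega : N - j < N - k),
      mul_zero, mul_zero]

lemma sum_neg_one_pow_mul_choose_mul_choose_mul_add_choose {N j : ℕ} (hj : j ≤ N) :
    ∑ k ∈ range (N + 1), ((-1) ^ k * N.choose k * k.choose j * (N + k).choose k : ℤ) =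
      (-1) ^ N * N.choose j * (N + j).choose j := by
  have hterm : ∀ k ∈ range (N + 1), ((-1) ^ k * N.choose k * k.choose j * (N + k).choose k : ℤ) =
      N.choose j * (binom (-(N + 1 : ℤ)) k * (N - j).choose (N - k)) := by
    intro k hk
    have h : (N.choose k * k.choose j : ℤ) = N.choose j * (N - j).choose (N - k) := by
      exact_mod_cast choose_mul_choose_eq_choose_mul_choose_sub (mem_range_succ_iff.1 hk) hj
    rw [binom_neg_succ]
    linear_combination ((-1) ^ k * (N + k).choose k : ℤ) * h
  have hvandermonde : ∑ k ∈ range (N + 1), binom (-(N + 1 : ℤ)) k * (N - j).choose (N - k) =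
      binom (-(j + 1 : ℤ)) N := by
    rw [show -(j + 1 : ℤ) = -(N + 1 : ℤ) + (N - j : ℕ) by push_cast [Nat.cast_sub hj]; ring,
      binom_add_natCast, Nat.sum_antidiagonal_eq_sum_range_succ_mk]
  rw [sum_congr rfl hterm, ← mul_sum, hvandermonde, binom_neg_succ, add_comm j N,
    Nat.choose_symm_add]
  ring

lemma sum_neg_one_pow_mul_add_choose_sq_mul_choose (N : ℕ) :
    ∑ k ∈ range (N + 1), ((-1) ^ k * (N + k).choose k ^ 2 * N.choose k : ℤ) =
      (-1) ^ N * ∑ k ∈ range (N + 1), (N.choose k ^ 2 * (N + k).choose k : ℤ) := by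
  have hv (k : ℕ) :
      ((N + k).choose k : ℤ) = ∑ j ∈ range (N + 1), (N.choose j * k.choose j : ℤ) := by
    exact_mod_cast add_choose_eq_sum_choose_mul_choose N k
  calc ∑ k ∈ range (N + 1), ((-1) ^ k * (N + k).choose k ^ 2 * N.choose k : ℤ)
      = ∑ k ∈ range (N + 1), ((-1) ^ k * N.choose k * (N + k).choose k : ℤ) *
          ∑ j ∈ range (N + 1), (N.choose j * k.choose j : ℤ) :=
        sum_congr rfl fun k _ => by rw [← hv]; ring
    _ = ∑ j ∈ range (N + 1), (N.choose j : ℤ) *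
          ∑ k ∈ range (N + 1), ((-1) ^ k * N.choose k * k.choose j * (N + k).choose k : ℤ) := by
        simp_rw [mul_sum]
        rw [sum_comm]
        exact sum_congr rfl fun j _ => sum_congr rfl fun k _ => by ring
    _ = ∑ j ∈ range (N + 1), (N.choose j * ((-1) ^ N * N.choose j * (N + j).choose j) : ℤ) :=
        sum_congr rfl fun j hj => by
          rw [sum_neg_one_pow_mul_choose_mul_choose_mul_add_choose (mem_range_succ_iff.1 hj)]
    _ = (-1) ^ N * ∑ k ∈ range (N + 1), (N.choose k ^ 2 * (N + k).choose k : ℤ) := by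
        rw [mul_sum]
        exact sum_congr rfl fun j _ => by ring

/-- The reflection identity `B(-n) = (-1)^{n-1} B(n-1)` for `n > 0`. -/
theorem stmt11 (n : ℤ) (hn : 0 < n) : B (-n) = (-1 : ℤ) ^ (n - 1).toNat * B (n - 1) := by
  obtain ⟨N, rfl⟩ : ∃ N : ℕ, n = N + 1 := ⟨(n - 1).toNat, by omega⟩
  rw [add_sub_cancel_right, Int.toNat_natCast, B_neg_succ, B_natCast,
    sum_neg_one_pow_mul_add_choose_sq_mul_choose]
end

section
/- Let d ≥ 1 and let H be the multiplicative inverse, in the ring of formal power series ℤ[[x1, …, xd]], of the polynomial (1 - x1)(1 - x2)···(1 - xd) - x1·x2···xd. Then for every n = (n1, …, nd) ∈ ℕ^d, the coefficient of x1^{n1}···xd^{nd} in H equals Y_d(n) = Σ_{k=0}^{min(n1, …, nd)} C(n1, k)·C(n2, k)···C(nd, k), where C denotes the usual binomial coefficient. -/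
/-!
Put `Q = ∏ᵢ (1 - xᵢ)`, `M = ∏ᵢ xᵢ` and `Gₖ = ∏ᵢ xᵢᵏ / (1 - xᵢ)ᵏ⁺¹`, whose coefficient at `m` is
`∏ᵢ C(mᵢ, k)`. Pascal's rule gives `Q G₀ = 1` and `Q Gₖ₊₁ = M Gₖ`, so `(Q - M)(G₀ + ⋯ + G_N)`
telescopes to `1 - M G_N`. Multiplying by `H = (Q - M)⁻¹` gives `H = G₀ + ⋯ + G_N + H M G_N`, and
for `N = min mᵢ` the last term has no monomial below `xᵐ`, because `M G_N` has none of degree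
`≤ N` in the variable where the minimum is attained.
-/

open Finset

namespace PowerSeries

noncomputable def chooseSeries (R : Type*) [Semiring R] (k : ℕ) : PowerSeries R :=
  mk fun n ↦ (n.choose k : R)

theorem coeff_X_mul_chooseSeries_of_le {R : Type*} [Semiring R] {n k : ℕ} (h : n ≤ k) :
    coeff n (X * chooseSeries R k) = 0 := by
  cases n with
  | zero => exact coeff_zero_X_mul _
  | succ n => simp [chooseSeries, coeff_succ_X_mul, Nat.choose_eq_zero_of_lt h]

variable {R : Type*} [Ring R]

theorem one_sub_X_mul_chooseSeries_zero : (1 - X) * chooseSeries R 0 = 1 := by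
  ext n
  cases n <;> simp [chooseSeries, sub_mul, coeff_succ_X_mul, coeff_one]

theorem one_sub_X_mul_chooseSeries_succ (k : ℕ) :
    (1 - X) * chooseSeries R (k + 1) = X * chooseSeries R k := by
  ext n
  cases n <;> simp [chooseSeries, sub_mul, coeff_succ_X_mul, Nat.choose_succ_succ]

end PowerSeries

namespace MvPowerSeries

open PowerSeries (chooseSeries)

theorem coeff_mul_eq_zero_of_forall_le {σ R : Type*} [Semiring R] {φ ψ : MvPowerSeries σ R}
    {m : σ →₀ ℕ} (hψ : ∀ m' ≤ m, coeff m' ψ = 0) : coeff m (φ * ψ) = 0 := by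
  classical
  rw [coeff_mul]
  exact sum_eq_zero fun p hp ↦ by
    rw [hψ p.2 (le_of_add_le_right (mem_antidiagonal.mp hp).le), mul_zero]

section CommSemiring

variable {σ R : Type*} [Fintype σ] [CommSemiring R]

/-- The series `∏ᵢ fᵢ(Xᵢ)`. -/
noncomputable def prodOfPowerSeries (f : σ → PowerSeries R) : MvPowerSeries σ R :=
  fun m ↦ ∏ i, PowerSeries.coeff (m i) (f i)

theorem coeff_prodOfPowerSeries (f : σ → PowerSeries R) (m : σ →₀ ℕ) :
    coeff m (prodOfPowerSeries f) = ∏ i, PowerSeries.coeff (m i) (f i) :=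
  rfl

theorem prodOfPowerSeries_one : prodOfPowerSeries (fun _ : σ ↦ (1 : PowerSeries R)) = 1 := by
  classical
  ext m
  simp only [coeff_prodOfPowerSeries, PowerSeries.coeff_one, Fintype.prod_boole, coeff_one,
    Finsupp.ext_iff, Finsupp.coe_zero, Pi.zero_apply]

variable [DecidableEq σ]

theorem coeff_prodOfPowerSeries_update (f : σ → PowerSeries R) (j : σ) (a : PowerSeries R)
    (m : σ →₀ ℕ) :
    coeff m (prodOfPowerSeries (Function.update f j a)) =
      PowerSeries.coeff (m j) a * ∏ i ∈ {j}ᶜ, PowerSeries.coeff (m i) (f i) := by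
  rw [coeff_prodOfPowerSeries, Fintype.prod_eq_mul_prod_compl j, Function.update_self]
  congr 1
  exact prod_congr rfl fun i hi ↦ by rw [Function.update_of_ne (by simpa using hi)]

theorem X_mul_prodOfPowerSeries (f : σ → PowerSeries R) (j : σ) :
    X j * prodOfPowerSeries f =
      prodOfPowerSeries (Function.update f j (PowerSeries.X * f j)) := by
  ext m
  rw [X_def, coeff_monomial_mul, one_mul, coeff_prodOfPowerSeries_update]
  split_ifs with hj
  · obtain ⟨n, hn⟩ := Nat.exists_eq_add_of_le' (Finsupp.single_le_iff.mp hj)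
    rw [coeff_prodOfPowerSeries, Fintype.prod_eq_mul_prod_compl j, hn,
      PowerSeries.coeff_succ_X_mul, Finsupp.tsub_apply, Finsupp.single_eq_same, hn,
      Nat.add_sub_cancel]
    congr 1
    refine prod_congr rfl fun i hi ↦ ?_
    rw [Finsupp.tsub_apply, Finsupp.single_eq_of_ne (by simpa using hi), Nat.sub_zero]
  · have hmj : m j = 0 := by simpa [Finsupp.single_le_iff] using hj
    rw [hmj, PowerSeries.coeff_zero_X_mul, zero_mul]

theorem prod_mul_prodOfPowerSeries (A : σ → MvPowerSeries σ R) (a : PowerSeries R)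
    (hA : ∀ f j, A j * prodOfPowerSeries f = prodOfPowerSeries (Function.update f j (a * f j)))
    (f : σ → PowerSeries R) :
    (∏ i, A i) * prodOfPowerSeries f = prodOfPowerSeries (fun i ↦ a * f i) := by
  suffices ∀ s : Finset σ, (∏ i ∈ s, A i) * prodOfPowerSeries f =
      prodOfPowerSeries (s.piecewise (fun i ↦ a * f i) f) by
    simpa using this univ
  intro s
  induction s using Finset.induction_on with
  | empty => simp
  | insert j s hj ih =>
    rw [prod_insert hj, mul_assoc, ih, hA, piecewise_insert, s.piecewise_eq_of_notMem _ _ hj]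

theorem prod_X_mul_prodOfPowerSeries (f : σ → PowerSeries R) :
    (∏ i, X i) * prodOfPowerSeries f = prodOfPowerSeries (fun i ↦ PowerSeries.X * f i) :=
  prod_mul_prodOfPowerSeries _ _ X_mul_prodOfPowerSeries f

end CommSemiring

variable {σ R : Type*} [Fintype σ] [DecidableEq σ] [CommRing R]

theorem prodOfPowerSeries_update_sub (f : σ → PowerSeries R) (j : σ) (a b : PowerSeries R) :
    prodOfPowerSeries (Function.update f j (a - b)) =
      prodOfPowerSeries (Function.update f j a) - prodOfPowerSeries (Function.update f j b) := by
  ext m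
  simp only [map_sub, coeff_prodOfPowerSeries_update, sub_mul]

theorem one_sub_X_mul_prodOfPowerSeries (f : σ → PowerSeries R) (j : σ) :
    (1 - X j) * prodOfPowerSeries f =
      prodOfPowerSeries (Function.update f j ((1 - PowerSeries.X) * f j)) := by
  rw [sub_mul, one_mul, X_mul_prodOfPowerSeries, sub_mul, one_mul,
    prodOfPowerSeries_update_sub, Function.update_eq_self]

theorem prod_one_sub_X_mul_prodOfPowerSeries (f : σ → PowerSeries R) :
    (∏ i, (1 - X i)) * prodOfPowerSeries f =
      prodOfPowerSeries (fun i ↦ (1 - PowerSeries.X) * f i) :=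
  prod_mul_prodOfPowerSeries _ _ one_sub_X_mul_prodOfPowerSeries f

theorem sub_mul_sum_prodOfPowerSeries_chooseSeries (N : ℕ) :
    ((∏ i : σ, (1 - X i)) - ∏ i, X i) *
        ∑ k ∈ range (N + 1), prodOfPowerSeries (fun _ : σ ↦ chooseSeries R k) =
      1 - (∏ i, X i) * prodOfPowerSeries (fun _ : σ ↦ chooseSeries R N) := by
  induction N with
  | zero =>
    rw [sum_range_one, sub_mul, prod_one_sub_X_mul_prodOfPowerSeries]
    simp only [PowerSeries.one_sub_X_mul_chooseSeries_zero, prodOfPowerSeries_one]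
  | succ N ih =>
    have hstep : (∏ i : σ, (1 - X i)) * prodOfPowerSeries (fun _ ↦ chooseSeries R (N + 1)) =
        (∏ i, X i) * prodOfPowerSeries (fun _ ↦ chooseSeries R N) := by
      rw [prod_one_sub_X_mul_prodOfPowerSeries, prod_X_mul_prodOfPowerSeries]
      simp only [PowerSeries.one_sub_X_mul_chooseSeries_succ]
    rw [sum_range_succ, mul_add, ih]
    linear_combination hstep

theorem coeff_eq_sum_prod_choose_of_mul_eq_one [Nonempty σ] {H : MvPowerSeries σ R}
    (hH : ((∏ i, (1 - X i)) - ∏ i, X i) * H = 1) (m : σ →₀ ℕ) :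
    coeff m H = ∑ k ∈ range ((⨅ i, m i) + 1), ∏ i, ((m i).choose k : R) := by
  set N := ⨅ i, m i
  set S := ∑ k ∈ range (N + 1), prodOfPowerSeries (fun _ : σ ↦ chooseSeries R k)
  obtain ⟨i₀, hi₀⟩ := exists_eq_ciInf_of_finite (f := fun i ↦ m i)
  have hS := sub_mul_sum_prodOfPowerSeries_chooseSeries (σ := σ) (R := R) N
  have hHS : H = S + H * ((∏ i, X i) * prodOfPowerSeries (fun _ ↦ chooseSeries R N)) := by
    linear_combination S * hH - H * hS
  rw [hHS, map_add, coeff_mul_eq_zero_of_forall_le, add_zero, map_sum]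
  · simp [coeff_prodOfPowerSeries, chooseSeries]
  · intro m' hm'
    rw [prod_X_mul_prodOfPowerSeries, coeff_prodOfPowerSeries]
    exact prod_eq_zero (mem_univ i₀)
      (PowerSeries.coeff_X_mul_chooseSeries_of_le ((hm' i₀).trans hi₀.le))

end MvPowerSeries

/-- The Taylor coefficients of the inverse of `(1-x₁)(1-x₂)⋯(1-x_d) - x₁x₂⋯x_d` are
`Y_d(n₁,…,n_d) = ∑_{k=0}^{min nᵢ} C(n₁,k) C(n₂,k) ⋯ C(n_d,k)`. -/
theorem stmt12 (d : ℕ) (hd : 1 ≤ d) (H : MvPowerSeries (Fin d) ℤ)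
    (hH : ((∏ i : Fin d, (1 - MvPowerSeries.X i)) - ∏ i : Fin d, MvPowerSeries.X i) * H = 1)
    (n : Fin d → ℕ) :
    MvPowerSeries.coeff (Finsupp.equivFunOnFinite.symm n) H =
      ∑ k ∈ Finset.range ((⨅ i, n i) + 1), ∏ i : Fin d, ((n i).choose k : ℤ) := by
  have : Nonempty (Fin d) := Fin.pos_iff_nonempty.mp hd
  exact MvPowerSeries.coeff_eq_sum_prod_choose_of_mul_eq_one hH _
end
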